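/- Let u, v be adjacent vertices of a simplicial complex X and f : X → ℝⁿ simplexwise α-Lipschitz for the ℓ_p norm, with |f(u)|_p ≥ r and |f(v)|_p ≥ r for some r > α n^{1/p}/2. Then the vertex approximation cannot assign f'(v) = e_j and f'(u) = −e_j for any j; i.e., adjacent vertices are never mapped to antipodal cross-polytope vertices. -/

import Mathlib

open scoped ENNReal

/-!
On `ℝⁿ` the `ℓ_p` norm is at most `n^{1/p}` times the sup norm, so a vector of `ℓ_p` norm at least
`r > α n^{1/p} / 2` has a coordinate of largest absolute value exceeding `α / 2`. If `a` and `b`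
had the same such coordinate `j`, with `a j < 0 ≤ b j`, then `|a j - b j| > α ≥ ‖a - b‖_p`, which
is impossible since the `ℓ_p` norm dominates every coordinate.
-/

namespace PiLp

variable {ι : Type*} [Fintype ι] {p : ℝ≥0∞} [Fact (1 ≤ p)] {β : ι → Type*}
  [∀ i, SeminormedAddCommGroup (β i)]

theorem norm_le_card_rpow_mul_norm_ofLp (x : PiLp p β) :
    ‖x‖ ≤ (Fintype.card ι : ℝ) ^ (1 / p).toReal * ‖WithLp.ofLp x‖ := by
  simpa [dist_eq_norm] using (antilipschitzWith_ofLp p β).le_mul_dist x 0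

theorem norm_le_card_rpow_mul_norm_apply_of_forall_le {x : PiLp p β} {j : ι}
    (hmax : ∀ i, ‖x i‖ ≤ ‖x j‖) :
    ‖x‖ ≤ (Fintype.card ι : ℝ) ^ (1 / p).toReal * ‖x j‖ := by
  have hsup : ‖WithLp.ofLp x‖ ≤ ‖x j‖ := (pi_norm_le_iff_of_nonneg (norm_nonneg _)).2 hmax
  calc ‖x‖ ≤ (Fintype.card ι : ℝ) ^ (1 / p).toReal * ‖WithLp.ofLp x‖ :=
        norm_le_card_rpow_mul_norm_ofLp x
    _ ≤ (Fintype.card ι : ℝ) ^ (1 / p).toReal * ‖x j‖ := by gcongr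

theorem lt_norm_apply_of_forall_le {x : PiLp p β} {j : ι} (hmax : ∀ i, ‖x i‖ ≤ ‖x j‖) {c : ℝ}
    (hc : c * (Fintype.card ι : ℝ) ^ (1 / p).toReal < ‖x‖) :
    c < ‖x j‖ := by
  have hx := hc.trans_le (norm_le_card_rpow_mul_norm_apply_of_forall_le hmax)
  rw [mul_comm] at hx
  exact lt_of_mul_lt_mul_left hx (by positivity)

end PiLp

/-- Let `u, v` be adjacent vertices (values `a = f u`, `b = f v` with
`‖a - b‖_p ≤ α`), both with ℓ_p norm at least `r > α n^{1/p} / 2`. Then the vertex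
approximation cannot map them to antipodal cross-polytope vertices: if `f'(u) = -e_{ja}`
(component `ja` maximal in absolute value and negative) and `f'(v) = e_{jb}` (component `jb`
maximal and nonnegative), then `ja ≠ jb`. -/
theorem stmt4 (n : ℕ) (p : ℝ≥0∞) [Fact (1 ≤ p)]
    (a b : PiLp p (fun _ : Fin n => ℝ)) (α r : ℝ)
    (hadj : ‖a - b‖ ≤ α)
    (hra : r ≤ ‖a‖) (hrb : r ≤ ‖b‖)
    (hr : α * (n : ℝ) ^ ((1 / p).toReal) / 2 < r)
    (ja jb : Fin n)
    (hja : ∀ i : Fin n,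
      |WithLp.equiv p (Fin n → ℝ) a i| ≤ |WithLp.equiv p (Fin n → ℝ) a ja|)
    (hjb : ∀ i : Fin n,
      |WithLp.equiv p (Fin n → ℝ) b i| ≤ |WithLp.equiv p (Fin n → ℝ) b jb|)
    (hsa : WithLp.equiv p (Fin n → ℝ) a ja < 0)
    (hsb : 0 ≤ WithLp.equiv p (Fin n → ℝ) b jb) :
    ja ≠ jb := by
  rintro rfl
  simp only [WithLp.equiv_apply] at hja hjb hsa hsb
  have hc : α / 2 * (Fintype.card (Fin n) : ℝ) ^ (1 / p).toReal < r := by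
    rw [Fintype.card_fin]; linarith
  have ha : α / 2 < -a ja := by
    simpa [abs_of_neg hsa] using PiLp.lt_norm_apply_of_forall_le hja (hc.trans_le hra)
  have hb : α / 2 < b ja := by
    simpa [abs_of_nonneg hsb] using PiLp.lt_norm_apply_of_forall_le hjb (hc.trans_le hrb)
  have hab : |a ja - b ja| ≤ α := by
    simpa using (PiLp.norm_apply_le (a - b) ja).trans hadj
  linarith [neg_abs_le (a ja - b ja)]
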